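/- arXiv:math/0410570 — 2 statements merged into one kernel-verified Lean document; each statement's English description precedes it below -/
import Mathlib

section
/- Let s ≥ 1 and integers k_1 ≥ 1, k_j ≥ 2 for 2 ≤ j ≤ s, with continuants n_{ij} and p := n_{1s}, q := n_{2s}. Let m ≥ 1 be an integer, let a_1,…,a_s be nonnegative integers satisfying (SI): Σ_{t=i}^{s} n_{t+1,s}·a_t < n_{is} for every 1 ≤ i ≤ s, and set a'_j := Σ_{t=j}^{s} n_{t+1,s}·a_t and a := a'_1. Fix an integer i ≥ 0 and set c_1 := k_1 + m, c_j := k_j for j ≥ 2. Suppose ū_1,…,ū_s are nonnegative integers such that, with ū_0 := i and ū_{s+1} := 0, one has ū_{j−1} − c_j·ū_j + ū_{j+1} ≤ a_j for every 1 ≤ j ≤ s. Then ū_1 ≥ ⌈(iq − a)/(p + qm)⌉ and ū_j ≥ ⌈(ū_{j−1}·n_{j+1,s} − a'_j)/n_{js}⌉ for 2 ≤ j ≤ s; consequently ū_j ≥ u_j for all j, where u_j are defined by u_1 := ⌈(iq − a)/(p + qm)⌉ and u_j := ⌈(u_{j−1}·n_{j+1,s} − a'_j)/n_{js}⌉. 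-/
/-- The continuants `n_{ij}` of the negative continued fraction
`[k_i,…,k_j]`: `n_{i,i−1} = 1`, `n_{ij} = 0` for `j < i−1`, and
`n_{ij} = k_i·n_{i+1,j} − n_{i+2,j}`. -/
def ncont (k : ℕ → ℤ) (i j : ℕ) : ℤ :=
  if j + 1 < i then 0
  else if j + 1 = i then 1
  else k i * ncont k (i + 1) j - ncont k (i + 2) j
termination_by j + 2 - i
decreasing_by all_goals omega

lemma ncont_rec' (k : ℕ → ℤ) {i j : ℕ} (h : i ≤ j) :
    ncont k i j = k i * ncont k (i + 1) j - ncont k (i + 2) j := by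
  rw [ncont, if_neg (by omega), if_neg (by omega)]

lemma ncont_one (k : ℕ → ℤ) (j : ℕ) : ncont k (j + 1) j = 1 := by
  rw [ncont, if_neg (by omega), if_pos rfl]

lemma ncont_zero (k : ℕ → ℤ) {i j : ℕ} (h : j + 1 < i) : ncont k i j = 0 := by
  rw [ncont, if_pos h]

lemma ncont_chain (s : ℕ) (k : ℕ → ℤ) (hk : ∀ j, 2 ≤ j → j ≤ s → 2 ≤ k j)
    (i : ℕ) (h2 : 2 ≤ i) (hi : i ≤ s + 1) :
    0 ≤ ncont k (i + 1) s ∧ ncont k (i + 1) s < ncont k i s := by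
  rcases Nat.eq_or_lt_of_le hi with rfl | h
  · exact ⟨by rw [ncont_zero k (by omega)],
      by rw [ncont_zero k (by omega), ncont_one]; norm_num⟩
  · have IH : 0 ≤ ncont k (i + 2) s ∧ ncont k (i + 2) s < ncont k (i + 1) s :=
      ncont_chain s k hk (i + 1) (by omega) (by omega)
    have hki : 2 ≤ k i := hk i h2 (by omega)
    have hpos : 0 ≤ ncont k (i + 1) s := by linarith [IH.1, IH.2]
    rw [ncont_rec' k (show i ≤ s by omega)]
    refine ⟨hpos, ?_⟩
    nlinarith [IH.1, IH.2, mul_nonneg (by linarith : (0:ℤ) ≤ k i - 2) hpos]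
termination_by s + 1 - i

lemma ncont_tele (s : ℕ) (k ubar : ℕ → ℤ) (hub : ubar (s + 1) = 0)
    (j : ℕ) (h2 : 2 ≤ j) (hj : j ≤ s + 1) :
    ∑ t ∈ Finset.Icc j s, ncont k (t + 1) s * (ubar (t - 1) - k t * ubar t + ubar (t + 1))
      = ncont k (j + 1) s * ubar (j - 1) - ncont k j s * ubar j := by
  rcases Nat.eq_or_lt_of_le hj with rfl | h
  · rw [Finset.Icc_eq_empty (by omega), Finset.sum_empty, ncont_zero k (by omega),
      ncont_one, hub]
    ring
  · have IH : ∑ t ∈ Finset.Icc (j + 1) s,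
        ncont k (t + 1) s * (ubar (t - 1) - k t * ubar t + ubar (t + 1))
        = ncont k (j + 2) s * ubar j - ncont k (j + 1) s * ubar (j + 1) := by
      have := ncont_tele s k ubar hub (j + 1) (by omega) (by omega)
      simpa using this
    have hins : Finset.Icc j s = insert j (Finset.Icc (j + 1) s) := by
      ext x; simp only [Finset.mem_Icc, Finset.mem_insert]; omega
    rw [hins, Finset.sum_insert (by simp only [Finset.mem_Icc]; omega), IH,
      ncont_rec' k (show j ≤ s by omega)]
    ring
termination_by s + 1 - j

/-- (Proposition 7.5(b) of the paper: minimality.)  Any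
nonnegative `ū_1,…,ū_s` satisfying the plumbing inequalities
`ū_{j−1} − c_j·ū_j + ū_{j+1} ≤ a_j` (with `ū_0 = i`, `ū_{s+1} = 0`,
`c_1 = k_1 + m`, `c_j = k_j`) satisfies the ceiling bounds, and hence
dominates the ceiling-defined `u_j`. -/
theorem cycle_zi_minimality
    (s : ℕ) (hs : 1 ≤ s) (k : ℕ → ℤ)
    (hk1 : 1 ≤ k 1) (hk : ∀ j, 2 ≤ j → j ≤ s → 2 ≤ k j)
    (m : ℤ) (hm : 1 ≤ m)
    (a : ℕ → ℤ) (ha : ∀ j, 1 ≤ j → j ≤ s → 0 ≤ a j)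
    (hSI : ∀ i, 1 ≤ i → i ≤ s →
      (∑ t ∈ Finset.Icc i s, ncont k (t + 1) s * a t) < ncont k i s)
    (a' : ℕ → ℤ) (ha' : ∀ j, a' j = ∑ t ∈ Finset.Icc j s, ncont k (t + 1) s * a t)
    (i : ℤ) (hi : 0 ≤ i)
    (c : ℕ → ℤ) (hc1 : c 1 = k 1 + m) (hcj : ∀ j, 2 ≤ j → c j = k j)
    (ubar : ℕ → ℤ)
    (hubar0 : ubar 0 = i) (hubars : ubar (s + 1) = 0)
    (hubarpos : ∀ j, 1 ≤ j → j ≤ s → 0 ≤ ubar j)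
    (hubarineq : ∀ j, 1 ≤ j → j ≤ s →
      ubar (j - 1) - c j * ubar j + ubar (j + 1) ≤ a j)
    (u : ℕ → ℤ)
    (hu1 : u 1 = ⌈((i * ncont k 2 s - a' 1 : ℤ) : ℚ) /
        ((ncont k 1 s + ncont k 2 s * m : ℤ) : ℚ)⌉)
    (huj : ∀ j, 2 ≤ j → j ≤ s →
      u j = ⌈((u (j - 1) * ncont k (j + 1) s - a' j : ℤ) : ℚ) / ((ncont k j s : ℤ) : ℚ)⌉) :
    (⌈((i * ncont k 2 s - a' 1 : ℤ) : ℚ) /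
        ((ncont k 1 s + ncont k 2 s * m : ℤ) : ℚ)⌉ ≤ ubar 1)
      ∧ (∀ j, 2 ≤ j → j ≤ s →
          ⌈((ubar (j - 1) * ncont k (j + 1) s - a' j : ℤ) : ℚ) /
            ((ncont k j s : ℤ) : ℚ)⌉ ≤ ubar j)
      ∧ (∀ j, 1 ≤ j → j ≤ s → u j ≤ ubar j) := by
  -- positivity facts about continuants
  have hpos2 : ∀ i', 2 ≤ i' → i' ≤ s + 1 → 1 ≤ ncont k i' s := by
    intro i' h2 hi'
    have := ncont_chain s k hk i' h2 hi'
    linarith [this.1, this.2]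
  have hnonneg : ∀ i', 2 ≤ i' → 0 ≤ ncont k i' s := by
    intro i' h2
    by_cases hi' : i' ≤ s + 1
    · linarith [hpos2 i' h2 hi']
    · rw [ncont_zero k (by omega)]
  have hch2 : 0 ≤ ncont k (2 + 1) s ∧ ncont k (2 + 1) s < ncont k 2 s :=
    ncont_chain s k hk 2 le_rfl (by omega)
  have hn1 : 1 ≤ ncont k 1 s := by
    rw [ncont_rec' k (show 1 ≤ s by omega)]
    have hn2 : 0 ≤ ncont k 2 s := by linarith [hch2.1, hch2.2]
    have h3 : ncont k (1 + 2) s = ncont k (2 + 1) s := by norm_num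
    rw [h3]
    nlinarith [hch2.1, hch2.2, mul_nonneg (by linarith : (0:ℤ) ≤ k 1 - 1) hn2]
  have hn2 : 0 ≤ ncont k 2 s := hnonneg 2 le_rfl
  have hden : 1 ≤ ncont k 1 s + ncont k 2 s * m := by
    nlinarith [mul_nonneg hn2 (by linarith : (0:ℤ) ≤ m)]
  -- key summed inequality for j ≥ 2
  have key : ∀ j, 2 ≤ j → j ≤ s + 1 →
      ncont k (j + 1) s * ubar (j - 1) - ncont k j s * ubar j ≤ a' j := by
    intro j h2 hj
    rw [ha' j, ← ncont_tele s k ubar hubars j h2 hj]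
    apply Finset.sum_le_sum
    intro t ht
    simp only [Finset.mem_Icc] at ht
    have h1 := hubarineq t (by omega) ht.2
    rw [hcj t (by omega)] at h1
    exact mul_le_mul_of_nonneg_left h1 (hnonneg (t + 1) (by omega))
  -- part 1 : the j = 1 inequality
  have key2 := key 2 le_rfl (by omega)
  norm_num at key2
  have h1 := hubarineq 1 le_rfl hs
  rw [hubar0, hc1] at h1
  have ha'1 : a' 1 = ncont k 2 s * a 1 + a' 2 := by
    have hins : Finset.Icc 1 s = insert 1 (Finset.Icc 2 s) := by
      ext x; simp only [Finset.mem_Icc, Finset.mem_insert]; omega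
    rw [ha' 1, ha' 2, hins, Finset.sum_insert (by simp only [Finset.mem_Icc]; omega)]
  have hmain1 : i * ncont k 2 s - a' 1 ≤ ubar 1 * (ncont k 1 s + ncont k 2 s * m) := by
    have hmul := mul_le_mul_of_nonneg_left h1 hn2
    have hrec : ncont k 1 s = k 1 * ncont k 2 s - ncont k 3 s := by
      rw [ncont_rec' k (show 1 ≤ s by omega)]
    rw [ha'1, hrec]
    nlinarith [hmul, key2]
  have part1 : ⌈((i * ncont k 2 s - a' 1 : ℤ) : ℚ) /
      ((ncont k 1 s + ncont k 2 s * m : ℤ) : ℚ)⌉ ≤ ubar 1 := by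
    rw [Int.ceil_le]
    rw [div_le_iff₀ (by exact_mod_cast (by linarith : (0:ℤ) < ncont k 1 s + ncont k 2 s * m))]
    exact_mod_cast hmain1
  -- part 2
  have part2 : ∀ j, 2 ≤ j → j ≤ s →
      ⌈((ubar (j - 1) * ncont k (j + 1) s - a' j : ℤ) : ℚ) /
        ((ncont k j s : ℤ) : ℚ)⌉ ≤ ubar j := by
    intro j h2 hjs
    have keyj := key j h2 (by omega)
    have hNj : 1 ≤ ncont k j s := hpos2 j h2 (by omega)
    rw [Int.ceil_le]
    rw [div_le_iff₀ (by exact_mod_cast (by linarith : (0:ℤ) < ncont k j s))]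
    have : ubar (j - 1) * ncont k (j + 1) s - a' j ≤ ubar j * ncont k j s := by linarith
    exact_mod_cast this
  refine ⟨part1, part2, ?_⟩
  -- part 3 : induction
  intro j hj1
  induction j, hj1 using Nat.le_induction with
  | base => intro _; rw [hu1]; exact part1
  | succ n hn IH =>
    intro hns
    have hIH := IH (by omega)
    rw [huj (n + 1) (by omega) hns]
    simp only [Nat.add_sub_cancel]
    have hNpos : (0:ℚ) < ((ncont k (n + 1) s : ℤ) : ℚ) := by
      exact_mod_cast hpos2 (n + 1) (by omega) (by omega)
    have hmono : ⌈((u n * ncont k (n + 1 + 1) s - a' (n + 1) : ℤ) : ℚ) /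
          ((ncont k (n + 1) s : ℤ) : ℚ)⌉ ≤
        ⌈((ubar n * ncont k (n + 1 + 1) s - a' (n + 1) : ℤ) : ℚ) /
          ((ncont k (n + 1) s : ℤ) : ℚ)⌉ := by
      apply Int.ceil_mono
      have hnum : (u n * ncont k (n + 1 + 1) s - a' (n + 1) : ℤ) ≤
          ubar n * ncont k (n + 1 + 1) s - a' (n + 1) := by
        have := mul_le_mul_of_nonneg_right hIH (hnonneg (n + 1 + 1) (by omega))
        linarith
      exact (div_le_div_iff_of_pos_right hNpos).mpr (by exact_mod_cast hnum)
    have hp2 := part2 (n + 1) (by omega) hns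
    simp only [Nat.add_sub_cancel] at hp2
    exact le_trans hmono hp2
end

section
/- Let Γ be a symmetric numerical semigroup with δ := #(ℕ∖Γ) ≥ 1, let p,q ≥ 1 be integers and 0 ≤ a < p. Then ℍ_red(R_{τ_a},χ_{τ_a}) = 0 if and only if a ≥ (2δ−1)q; equivalently, the graded root (R_{τ_a},χ_{τ_a}) has a unique local minimum point if and only if a ≥ (2δ−1)q (in which case t_a = −1 and R_{τ_a} = R_0, the infinite path starting at grading 0). In particular, for a = 0 one always has ℍ_red(R_{τ_0},χ_{τ_0}) ≠ 0. -/
noncomputable section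

/-- Pre-vertices of the graded root `R_τ` associated with `τ : {0,…,T₀} → ℤ`:
pairs `(i,k)` with `i ≤ T₀` and `τ i ≤ k`, representing the vertex `v_i^k`. -/
def RootVpre (T0 : ℕ) (τ : ℕ → ℤ) : Type := {x : ℕ × ℤ // x.1 ≤ T0 ∧ τ x.1 ≤ x.2}

/-- The identification `v_i^k ∼ v_j^k` whenever `k ≥ τ(l)` for every `l` between `i` and `j`. -/
def RootSetoid (T0 : ℕ) (τ : ℕ → ℤ) : Setoid (RootVpre T0 τ) where
  r x y := x.1.2 = y.1.2 ∧
    ∀ l : ℕ, ((x.1.1 ≤ l ∧ l ≤ y.1.1) ∨ (y.1.1 ≤ l ∧ l ≤ x.1.1)) → τ l ≤ x.1.2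
  iseqv := by
    constructor
    · intro x
      refine ⟨rfl, ?_⟩
      intro l hl
      have : l = x.1.1 := by omega
      rw [this]
      exact x.2.2
    · intro x y h
      refine ⟨h.1.symm, ?_⟩
      intro l hl
      rw [← h.1]
      exact h.2 l (by tauto)
    · intro x y z hxy hyz
      refine ⟨hxy.1.trans hyz.1, ?_⟩
      intro l hl
      have h2 := hxy.2
      have h3 := hyz.2
      rcases (by omega :
          ((x.1.1 ≤ l ∧ l ≤ y.1.1) ∨ (y.1.1 ≤ l ∧ l ≤ x.1.1)) ∨
          ((y.1.1 ≤ l ∧ l ≤ z.1.1) ∨ (z.1.1 ≤ l ∧ l ≤ y.1.1))) with h | h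
      · exact h2 l h
      · rw [hxy.1]
        exact h3 l h

/-- The vertex set of the graded root `R_τ`. -/
def RootV (T0 : ℕ) (τ : ℕ → ℤ) : Type := Quotient (RootSetoid T0 τ)

/-- The grading `χ_τ` of `R_τ`. -/
def rootχ (T0 : ℕ) (τ : ℕ → ℤ) : RootV T0 τ → ℤ :=
  Quotient.lift (fun x : RootVpre T0 τ => x.1.2) (fun _ _ h => h.1)

/-- The vertex `v_i^{k+1}` above `v_i^k`. -/
def rootStep (T0 : ℕ) (τ : ℕ → ℤ) (x : RootVpre T0 τ) : RootVpre T0 τ :=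
  ⟨(x.1.1, x.1.2 + 1), x.2.1, by show τ x.1.1 ≤ x.1.2 + 1; have := x.2.2; omega⟩

/-- The edges of `R_τ`: each `v_i^k` is connected with `v_i^{k+1}`. -/
def rootAdj (T0 : ℕ) (τ : ℕ → ℤ) (u v : RootV T0 τ) : Prop :=
  (∃ x, u = Quotient.mk (RootSetoid T0 τ) x ∧
        v = Quotient.mk (RootSetoid T0 τ) (rootStep T0 τ x)) ∨
  (∃ x, v = Quotient.mk (RootSetoid T0 τ) x ∧
        u = Quotient.mk (RootSetoid T0 τ) (rootStep T0 τ x))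

/-- A vertex of `R_τ` (given `i ≤ T₀` and `τ i ≤ k`). -/
def rootMk (T0 : ℕ) (τ : ℕ → ℤ) (i : ℕ) (k : ℤ) (hi : i ≤ T0) (hk : τ i ≤ k) :
    RootV T0 τ :=
  Quotient.mk (RootSetoid T0 τ) ⟨(i, k), hi, hk⟩

/-- A local minimum point of a χ-graded graph. -/
def IsLocMin {V : Type} (Adj : V → V → Prop) (χ : V → ℤ) (v : V) : Prop :=
  ∀ w, Adj v w → χ v < χ w

end

noncomputable section

/-- The delta-invariant `δ = #(ℕ∖Γ)` of a numerical semigroup `Γ`. -/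
def sdelta (Γ : Set ℕ) : ℕ := Γᶜ.ncard

/-- `α_i = #{k ∈ ℕ∖Γ : k > i}`. -/
def salpha (Γ : Set ℕ) (i : ℕ) : ℕ := {k : ℕ | k ∉ Γ ∧ i < k}.ncard

/-- `τ_a(2t) = t(1−δ) + Σ_{j=0}^{t−1} ⌊(jp+a)/q⌋`. -/
def tauEven (Γ : Set ℕ) (p q a : ℕ) (t : ℕ) : ℤ :=
  (t : ℤ) * (1 - (sdelta Γ : ℤ)) + ∑ j ∈ Finset.range t, (((j * p + a) / q : ℕ) : ℤ)

/-- The function `τ_a : {0,1,…,2t_a+2} → ℤ`: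
`τ_a(2t)` as above and `τ_a(2t+1) = τ_a(2t+2) + α_{⌊(tp+a)/q⌋}`. -/
def tauFun (Γ : Set ℕ) (p q a : ℕ) (n : ℕ) : ℤ :=
  if n % 2 = 0 then tauEven Γ p q a (n / 2)
  else tauEven Γ p q a (n / 2 + 1) + (salpha Γ ((n / 2 * p + a) / q) : ℤ)

/-- `t_a = ⌊((2δ−1)q − a − 1)/p⌋`. -/
def tA (Γ : Set ℕ) (p q a : ℕ) : ℤ :=
  ((2 * (sdelta Γ : ℤ) - 1) * (q : ℤ) - (a : ℤ) - 1) / (p : ℤ)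

/-- The length `T₀ = 2t_a + 2` of the domain of `τ_a`. -/
def rootT0 (Γ : Set ℕ) (p q a : ℕ) : ℕ := (2 * tA Γ p q a + 2).toNat

end


-- ===================== my helpers =====================
section helpers
variable (T0 : ℕ) (τ : ℕ → ℤ)

lemma rootχ_mk (i : ℕ) (k : ℤ) (hi : i ≤ T0) (hk : τ i ≤ k) :
    rootχ T0 τ (rootMk T0 τ i k hi hk) = k := rfl

lemma isLocMin_mk (i : ℕ) (hi : i ≤ T0)
    (h1 : 1 ≤ i → τ i < τ (i - 1))
    (h2 : i < T0 → τ i < τ (i + 1)) :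
    IsLocMin (rootAdj T0 τ) (rootχ T0 τ) (rootMk T0 τ i (τ i) hi le_rfl) := by
  intro w hadj
  rcases hadj with ⟨x, hv, hw⟩ | ⟨x, hw, hv⟩
  · have hrel := Quotient.exact hv
    have h1' : τ i = x.1.2 := hrel.1
    rw [hw]
    show rootχ T0 τ (rootMk T0 τ i (τ i) hi le_rfl) < x.1.2 + 1
    rw [rootχ_mk]
    omega
  · exfalso
    have hrel := Quotient.exact hv
    have heq : τ i = x.1.2 + 1 := hrel.1
    have hbet : ∀ l : ℕ, ((i ≤ l ∧ l ≤ x.1.1) ∨ (x.1.1 ≤ l ∧ l ≤ i)) → τ l ≤ τ i :=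
      hrel.2
    have hx2 : τ x.1.1 ≤ x.1.2 := x.2.2
    have hne : x.1.1 ≠ i := by
      intro h; rw [h] at hx2; omega
    rcases Nat.lt_or_ge x.1.1 i with hlt | hge
    · have := hbet (i - 1) (by omega)
      have := h1 (by omega)
      omega
    · have hgt : i < x.1.1 := by omega
      have := hbet (i + 1) (by omega)
      have := h2 (by have := x.2.1; omega)
      omega

lemma not_isLocMin (i : ℕ) (k : ℤ) (hi : i ≤ T0) (hk : τ i ≤ k)
    (j : ℕ) (hj : j ≤ T0) (hjk : τ j ≤ k - 1)
    (hbet : ∀ l : ℕ, ((i ≤ l ∧ l ≤ j) ∨ (j ≤ l ∧ l ≤ i)) → τ l ≤ k) :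
    ¬ IsLocMin (rootAdj T0 τ) (rootχ T0 τ) (rootMk T0 τ i k hi hk) := by
  intro h
  set x : RootVpre T0 τ := ⟨(j, k - 1), hj, hjk⟩ with hx
  have hstep : rootMk T0 τ i k hi hk =
      Quotient.mk (RootSetoid T0 τ) (rootStep T0 τ x) := by
    apply Quotient.sound
    refine ⟨by show k = k - 1 + 1; ring, ?_⟩
    intro l hl
    exact hbet l hl
  have hadj : rootAdj T0 τ (rootMk T0 τ i k hi hk)
      (Quotient.mk (RootSetoid T0 τ) x) := Or.inr ⟨x, rfl, hstep⟩
  have := h _ hadj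
  rw [rootχ_mk] at this
  show False
  have : k < k - 1 := this
  omega

end helpers

section arith
variable (Γ : Set ℕ) (p q a : ℕ)

lemma tauFun_even (t : ℕ) : tauFun Γ p q a (2 * t) = tauEven Γ p q a t := by
  have h1 : (2 * t) % 2 = 0 := by omega
  have h2 : (2 * t) / 2 = t := by omega
  simp [tauFun, h1, h2]

lemma tauFun_odd (t : ℕ) :
    tauFun Γ p q a (2 * t + 1) =
      tauEven Γ p q a (t + 1) + (salpha Γ ((t * p + a) / q) : ℤ) := by
  have h1 : (2 * t + 1) % 2 = 1 := by omega
  have h2 : (2 * t + 1) / 2 = t := by omega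
  simp [tauFun, h1, h2]

lemma tauEven_succ (t : ℕ) :
    tauEven Γ p q a (t + 1) =
      tauEven Γ p q a t + (1 - (sdelta Γ : ℤ)) + (((t * p + a) / q : ℕ) : ℤ) := by
  simp [tauEven, Finset.sum_range_succ]
  ring

lemma delta_le_add_salpha (h0 : 0 ∈ Γ) (hfin : Γᶜ.Finite) (m : ℕ) :
    sdelta Γ ≤ m + salpha Γ m := by
  have hsplit : Γᶜ = {k : ℕ | k ∉ Γ ∧ k ≤ m} ∪ {k : ℕ | k ∉ Γ ∧ m < k} := by
    ext k
    simp only [Set.mem_compl_iff, Set.mem_union, Set.mem_setOf_eq]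
    rcases le_or_gt k m with h | h <;> tauto
  have hA : {k : ℕ | k ∉ Γ ∧ k ≤ m} ⊆ Γᶜ := fun k hk => hk.1
  have hB : {k : ℕ | k ∉ Γ ∧ m < k} ⊆ Γᶜ := fun k hk => hk.1
  have hAfin := hfin.subset hA
  have hBfin := hfin.subset hB
  have hdisj : Disjoint {k : ℕ | k ∉ Γ ∧ k ≤ m} {k : ℕ | k ∉ Γ ∧ m < k} := by
    rw [Set.disjoint_left]
    intro k hk hk'
    exact absurd hk'.2 (by have := hk.2; omega)
  have hcard : sdelta Γ = {k : ℕ | k ∉ Γ ∧ k ≤ m}.ncard + salpha Γ m := by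
    rw [sdelta, hsplit, Set.ncard_union_eq hdisj hAfin hBfin]; rfl
  have hsub : {k : ℕ | k ∉ Γ ∧ k ≤ m} ⊆ Set.Icc 1 m := by
    intro k hk
    rcases hk with ⟨hk1, hk2⟩
    have : k ≠ 0 := fun h => hk1 (h ▸ h0)
    exact ⟨by omega, hk2⟩
  have hIcc : (Set.Icc 1 m).ncard = m := by
    rw [← Nat.card_coe_set_eq, Nat.card_eq_card_toFinset]
    simp
  have := Set.ncard_le_ncard hsub (Set.finite_Icc 1 m)
  omega

lemma salpha_pos (hfin : Γᶜ.Finite) (m g : ℕ) (hg : g ∉ Γ) (hmg : m < g) :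
    1 ≤ salpha Γ m := by
  have hsub : {k : ℕ | k ∉ Γ ∧ m < k} ⊆ Γᶜ := fun k hk => hk.1
  have : 0 < salpha Γ m := by
    rw [salpha, Set.ncard_pos (hfin.subset hsub)]
    exact ⟨g, hg, hmg⟩
  omega

lemma key_lt (h0 : 0 ∈ Γ) (hfin : Γᶜ.Finite) (hδ1 : 1 ≤ sdelta Γ)
    (hgap : (2 * sdelta Γ - 1 : ℕ) ∉ Γ)
    (hp : 1 ≤ p) (hq : 1 ≤ q)
    (t : ℕ) (ht : (t : ℤ) ≤ tA Γ p q a) :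
    tauFun Γ p q a (2 * t) < tauFun Γ p q a (2 * t + 1) ∧
    tauFun Γ p q a (2 * t + 2) < tauFun Γ p q a (2 * t + 1) := by
  set δ := sdelta Γ with hδ
  set m := (t * p + a) / q with hm
  -- t * p + a + 1 ≤ (2δ-1) q
  have hep : ((p : ℤ)) ≠ 0 := by omega
  have h1 : tA Γ p q a * p ≤ (2 * (δ : ℤ) - 1) * q - a - 1 :=
    Int.ediv_mul_le _ hep
  have h2 : (t : ℤ) * p ≤ tA Γ p q a * p :=
    mul_le_mul_of_nonneg_right ht (by positivity)
  have h3 : ((t * p + a : ℕ) : ℤ) + 1 ≤ (2 * (δ : ℤ) - 1) * q := by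
    push_cast
    linarith
  have h4 : t * p + a < (2 * δ - 1) * q := by
    zify [show 1 ≤ 2 * δ by omega]
    push_cast at h3
    linarith
  have hmlt : m < 2 * δ - 1 := by
    rw [hm, Nat.div_lt_iff_lt_mul (by omega : 0 < q)]
    calc t * p + a < (2 * δ - 1) * q := h4
    _ ≤ (2 * δ - 1) * q := le_rfl
  have hα : 1 ≤ salpha Γ m := salpha_pos Γ hfin m (2 * δ - 1) hgap hmlt
  have hδm : δ ≤ m + salpha Γ m := delta_le_add_salpha Γ h0 hfin m
  rw [tauFun_odd, show 2 * t + 2 = 2 * (t + 1) by ring, tauFun_even, tauFun_even,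
    tauEven_succ]
  rw [← hm]
  constructor <;> omega

end arith
/-- (Remark 4.8 of the paper.)  For a symmetric numerical
semigroup `Γ` with `δ ≥ 1` and `p,q ≥ 1`, `0 ≤ a < p`: the graded root
`(R_{τ_a},χ_{τ_a})` has a unique local minimum point (equivalently,
`ℍ_red(R_{τ_a},χ_{τ_a}) = 0`) if and only if `a ≥ (2δ−1)q`; in that case
`t_a = −1` (so `R_{τ_a} = R_0`).  In particular for `a = 0` there is always
more than one local minimum point, i.e. `ℍ_red(R_{τ_0},χ_{τ_0}) ≠ 0`. -/
theorem unique_local_minimum_iff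
    (Γ : Set ℕ)
    (h0 : 0 ∈ Γ) (hadd : ∀ x ∈ Γ, ∀ y ∈ Γ, x + y ∈ Γ)
    (hfin : Γᶜ.Finite) (hδ1 : 1 ≤ sdelta Γ)
    (hsym : ∀ k : ℕ, k ≤ 2 * sdelta Γ - 1 → (k ∈ Γ ↔ (2 * sdelta Γ - 1 - k) ∉ Γ))
    (p q a : ℕ) (hp : 1 ≤ p) (hq : 1 ≤ q) (ha : a < p) :
    ((∃! v : RootV (rootT0 Γ p q a) (tauFun Γ p q a),
          IsLocMin (rootAdj (rootT0 Γ p q a) (tauFun Γ p q a))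
            (rootχ (rootT0 Γ p q a) (tauFun Γ p q a)) v)
        ↔ (2 * (sdelta Γ : ℤ) - 1) * q ≤ a)
      ∧ ((2 * (sdelta Γ : ℤ) - 1) * q ≤ a → tA Γ p q a = -1)
      ∧ (a = 0 →
          ¬ ∃! v : RootV (rootT0 Γ p q a) (tauFun Γ p q a),
              IsLocMin (rootAdj (rootT0 Γ p q a) (tauFun Γ p q a))
                (rootχ (rootT0 Γ p q a) (tauFun Γ p q a)) v) := by
  have hgap : (2 * sdelta Γ - 1 : ℕ) ∉ Γ := by
    have h := hsym (2 * sdelta Γ - 1) le_rfl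
    rw [Nat.sub_self] at h
    exact fun hmem => (h.mp hmem) h0
  have hq' : (1 : ℤ) ≤ (q : ℤ) := by exact_mod_cast hq
  have ha' : (a : ℤ) < (p : ℤ) := by exact_mod_cast ha
  have part2 : (2 * (sdelta Γ : ℤ) - 1) * q ≤ a → tA Γ p q a = -1 := by
    intro hle
    have hd : (1 : ℤ) ≤ 2 * (sdelta Γ : ℤ) - 1 := by omega
    have hN : (1 : ℤ) ≤ (2 * (sdelta Γ : ℤ) - 1) * q :=
      le_trans hd (le_mul_of_one_le_right (by omega) hq')
    rw [tA]
    have key : ((2 * (sdelta Γ : ℤ) - 1) * q - a - 1) =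
        ((2 * (sdelta Γ : ℤ) - 1) * q - a - 1 + p) + (-1) * p := by ring
    rw [key, Int.add_mul_ediv_right _ _ (by omega : (p : ℤ) ≠ 0),
      Int.ediv_eq_zero_of_lt (by linarith) (by linarith)]
    norm_num
  have hiff : (∃! v : RootV (rootT0 Γ p q a) (tauFun Γ p q a),
          IsLocMin (rootAdj (rootT0 Γ p q a) (tauFun Γ p q a))
            (rootχ (rootT0 Γ p q a) (tauFun Γ p q a)) v)
        ↔ (2 * (sdelta Γ : ℤ) - 1) * q ≤ a := by
    by_cases hcase : (2 * (sdelta Γ : ℤ) - 1) * q ≤ a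
    · refine iff_of_true ?_ hcase
      have hT00 : rootT0 Γ p q a = 0 := by
        rw [rootT0, part2 hcase]; decide
      refine ⟨rootMk (rootT0 Γ p q a) (tauFun Γ p q a) 0 (tauFun Γ p q a 0)
        (Nat.zero_le _) le_rfl, ?_, ?_⟩
      · exact isLocMin_mk _ _ 0 (Nat.zero_le _)
          (fun h => absurd h (by norm_num))
          (fun h => absurd h (by omega))
      · intro w hw
        obtain ⟨x, rfl⟩ := Quotient.exists_rep w
        obtain ⟨⟨i, k⟩, hi, hk⟩ := x
        change i ≤ rootT0 Γ p q a at hi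
        change tauFun Γ p q a i ≤ k at hk
        have hi0 : i = 0 := by omega
        subst hi0
        rcases eq_or_lt_of_le hk with heq | hlt
        · subst heq
          rfl
        · exact absurd hw (not_isLocMin _ _ 0 k hi hk 0 hi (by omega)
            (fun l hl => by
              have hl0 : l = 0 := by omega
              rw [hl0]; omega))
    · refine iff_of_false ?_ hcase
      push_neg at hcase
      have htA0 : 0 ≤ tA Γ p q a :=
        Int.ediv_nonneg (by linarith) (by omega)
      have hT02 : 2 ≤ rootT0 Γ p q a := by
        rw [rootT0]; omega
      have key0 := key_lt Γ p q a h0 hfin hδ1 hgap hp hq 0 htA0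
      norm_num at key0
      intro hEU
      obtain ⟨v, hv, huni⟩ := hEU
      have hloc0 : IsLocMin (rootAdj (rootT0 Γ p q a) (tauFun Γ p q a))
          (rootχ (rootT0 Γ p q a) (tauFun Γ p q a))
          (rootMk (rootT0 Γ p q a) (tauFun Γ p q a) 0 (tauFun Γ p q a 0)
            (Nat.zero_le _) le_rfl) :=
        isLocMin_mk _ _ 0 (Nat.zero_le _)
          (fun h => absurd h (by norm_num))
          (fun _ => key0.1)
      have hloc2 : IsLocMin (rootAdj (rootT0 Γ p q a) (tauFun Γ p q a))
          (rootχ (rootT0 Γ p q a) (tauFun Γ p q a))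
          (rootMk (rootT0 Γ p q a) (tauFun Γ p q a) 2 (tauFun Γ p q a 2)
            hT02 le_rfl) := by
        refine isLocMin_mk _ _ 2 hT02 (fun _ => key0.2) ?_
        intro hlt
        have htA1 : (1 : ℤ) ≤ tA Γ p q a := by
          rw [rootT0] at hlt; omega
        have key1 := key_lt Γ p q a h0 hfin hδ1 hgap hp hq 1 htA1
        norm_num at key1
        exact key1.1
      have e0 := huni _ hloc0
      have e2 := huni _ hloc2
      rw [← e2] at e0
      have hrel := Quotient.exact e0
      have h02 : tauFun Γ p q a 0 = tauFun Γ p q a 2 := hrel.1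
      have h1le : tauFun Γ p q a 1 ≤ tauFun Γ p q a 0 :=
        hrel.2 1 (Or.inl ⟨by exact Nat.zero_le 1, by exact Nat.le_succ 1⟩)
      omega
  refine ⟨hiff, part2, fun ha0 => ?_⟩
  rw [hiff]
  subst ha0
  intro hle
  norm_num at hle
  have h1 : (1 : ℤ) ≤ 2 * (sdelta Γ : ℤ) - 1 := by omega
  have h2 : (1 : ℤ) * 1 ≤ (2 * (sdelta Γ : ℤ) - 1) * q :=
    mul_le_mul h1 hq' (by norm_num) (by linarith)
  linarith
end
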